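/- Corollary 1 (Expectation of log-beliefs ψ_{k,i}). Let θ_TX = θ₀ and run the partial-information algorithm with self-awareness, under Assumptions 1 and 2. Then for every agent k and every i ≥ 1, E[log(1/ψ_{k,i}(θ_TX))] ≤ (1/v_k) Σ_{ℓ=1}^K v_ℓ log(1/μ_{ℓ,0}(θ_TX)). -/

import Mathlib

/-!
Let `V i = ∑ k, v k * E[log (1 / μ k i θ₀)]`. Bayesian adaptation gives
`log (1 / ψ k (i+1) θ₀) = log (1 / μ k i θ₀) + log T ≤ log (1 / μ k i θ₀) + (T - 1)` with
`T = ∑ θ, μ k i θ * L k θ ξ / L k θ₀ ξ`, and `E T = 1` because the fresh signal `ξ`, distributed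
as `L k θ₀`, is independent of the current beliefs. In the combination step the censored beliefs
agree with the intermediate ones at `θ₀`, and weighted AM-GM bounds the normaliser of the
geometric pooling by `1`, so `log (1 / μ k (i+1) θ₀) ≤ ∑ ℓ, a ℓ k * log (1 / ψ ℓ (i+1) θ₀)`;
averaging against the Perron vector `v` absorbs the mixing. Hence
`v k * E[log (1 / ψ k (i+1) θ₀)] ≤ ∑ ℓ, v ℓ * E[log (1 / ψ ℓ (i+1) θ₀)] ≤ V i ≤ V 0`.
-/

open MeasureTheory ProbabilityTheory Finset Real

section Updates

variable {ι κ : Type*} [Fintype ι]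

noncomputable def bayesUpdate (m l : ι → ℝ) (θ : ι) : ℝ :=
  m θ * l θ / ∑ θ', m θ' * l θ'

noncomputable def geometricPool [Fintype κ] [DecidableEq κ] (a : κ → κ → ℝ) (p q : κ → ι → ℝ)
    (k : κ) (θ : ι) : ℝ :=
  exp (a k k * log (p k θ) + ∑ ℓ ∈ univ.erase k, a ℓ k * log (q ℓ θ)) /
    ∑ θ', exp (a k k * log (p k θ') + ∑ ℓ ∈ univ.erase k, a ℓ k * log (q ℓ θ'))

lemma div_sum_pos {w : ι → ℝ} (hw : ∀ θ, 0 < w θ) (θ : ι) : 0 < w θ / ∑ θ', w θ' :=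
  div_pos (hw θ) (sum_pos (fun θ' _ => hw θ') ⟨θ, mem_univ θ⟩)

lemma sum_div_sum_self [Nonempty ι] {w : ι → ℝ} (hw : ∀ θ, 0 < w θ) :
    ∑ θ, w θ / ∑ θ', w θ' = 1 := by
  rw [← sum_div, div_self (sum_pos (fun θ _ => hw θ) univ_nonempty).ne']

lemma lt_one_of_sum_eq_one {p : ι → ℝ} (hp : ∀ θ, 0 < p θ) (hp1 : ∑ θ, p θ = 1) {θ θ' : ι}
    (hne : θ' ≠ θ) : p θ < 1 := by
  classical
  calc p θ < p θ + p θ' := lt_add_of_pos_right _ (hp θ')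
    _ = ∑ x ∈ {θ, θ'}, p x := (sum_pair hne.symm).symm
    _ ≤ ∑ x, p x := sum_le_univ_sum_of_nonneg fun x => (hp x).le
    _ = 1 := hp1

lemma log_inv_bayesUpdate_le {m l : ι → ℝ} (hm : ∀ θ, 0 < m θ) (hl : ∀ θ, 0 < l θ) (θ₀ : ι) :
    log (1 / bayesUpdate m l θ₀) ≤ log (1 / m θ₀) + ((∑ θ, m θ * (l θ / l θ₀)) - 1) := by
  have hratio : ∑ θ, m θ * (l θ / l θ₀) = (∑ θ, m θ * l θ) / l θ₀ := by
    simp only [sum_div, mul_div_assoc]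
  have hpos : 0 < ∑ θ, m θ * (l θ / l θ₀) := by
    rw [hratio]
    exact div_pos (sum_pos (fun θ _ => mul_pos (hm θ) (hl θ)) ⟨θ₀, mem_univ θ₀⟩) (hl θ₀)
  have hupdate : bayesUpdate m l θ₀ = m θ₀ / ∑ θ, m θ * (l θ / l θ₀) := by
    rw [hratio, bayesUpdate, div_div_eq_mul_div]
  rw [hupdate, one_div_div, log_div hpos.ne' (hm θ₀).ne', one_div, log_inv]
  linarith [log_le_sub_one_of_pos hpos]

variable [Fintype κ]

lemma geometricPool_pos [DecidableEq κ] (a : κ → κ → ℝ) (p q : κ → ι → ℝ) (k : κ) (θ : ι) :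
    0 < geometricPool a p q k θ :=
  div_pos (exp_pos _) (sum_pos (fun _ _ => exp_pos _) ⟨θ, mem_univ θ⟩)

lemma sum_geometricPool [Nonempty ι] [DecidableEq κ] (a : κ → κ → ℝ) (p q : κ → ι → ℝ) (k : κ) :
    ∑ θ, geometricPool a p q k θ = 1 :=
  sum_div_sum_self fun _ => exp_pos _

lemma sum_exp_weighted_log_le_one {w : κ → ℝ} (hw : ∀ ℓ, 0 ≤ w ℓ) (hw1 : ∑ ℓ, w ℓ = 1)
    {p : κ → ι → ℝ} (hp : ∀ ℓ θ, 0 < p ℓ θ) (hp1 : ∀ ℓ, ∑ θ, p ℓ θ = 1) :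
    ∑ θ, exp (∑ ℓ, w ℓ * log (p ℓ θ)) ≤ 1 := by
  calc ∑ θ, exp (∑ ℓ, w ℓ * log (p ℓ θ))
      ≤ ∑ θ, ∑ ℓ, w ℓ * exp (log (p ℓ θ)) := sum_le_sum fun θ _ =>
        convexOn_exp.map_sum_le (fun ℓ _ => hw ℓ) hw1 (fun _ _ => Set.mem_univ _)
    _ = ∑ ℓ, w ℓ * ∑ θ, p ℓ θ := by
        rw [sum_comm]; simp only [exp_log (hp _ _), mul_sum]
    _ = 1 := by simp only [hp1, mul_one, hw1]

lemma log_inv_geometricPool_le [DecidableEq κ] {a : κ → κ → ℝ} {k : κ} (ha : ∀ ℓ, 0 ≤ a ℓ k)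
    (ha1 : ∑ ℓ, a ℓ k = 1) {p q : κ → ι → ℝ} (hp : ∀ ℓ θ, 0 < p ℓ θ) (hp1 : ∀ ℓ, ∑ θ, p ℓ θ = 1)
    (hq : ∀ ℓ θ, 0 < q ℓ θ) (hq1 : ∀ ℓ, ∑ θ, q ℓ θ = 1) {θ₀ : ι} (hpq : ∀ ℓ, q ℓ θ₀ = p ℓ θ₀) :
    log (1 / geometricPool a p q k θ₀) ≤ ∑ ℓ, a ℓ k * log (1 / p ℓ θ₀) := by
  set r : κ → ι → ℝ := fun ℓ => if ℓ = k then p k else q ℓ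
  have hr : ∀ ℓ θ, 0 < r ℓ θ := fun ℓ θ => by
    simp only [r]; split_ifs
    exacts [hp k θ, hq ℓ θ]
  have hr1 : ∀ ℓ, ∑ θ, r ℓ θ = 1 := fun ℓ => by
    simp only [r]; split_ifs
    exacts [hp1 k, hq1 ℓ]
  have hrθ₀ : ∀ ℓ, r ℓ θ₀ = p ℓ θ₀ := fun ℓ => by
    simp only [r]; split_ifs with hℓ
    exacts [hℓ ▸ rfl, hpq ℓ]
  have hexponent : ∀ θ, a k k * log (p k θ) + ∑ ℓ ∈ univ.erase k, a ℓ k * log (q ℓ θ) =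
      ∑ ℓ, a ℓ k * log (r ℓ θ) := fun θ => by
    rw [← add_sum_erase _ _ (mem_univ k)]
    congr 1
    · simp [r]
    · exact sum_congr rfl fun ℓ hℓ => by simp [r, ne_of_mem_erase hℓ]
  have hpool : geometricPool a p q k θ₀ =
      exp (∑ ℓ, a ℓ k * log (r ℓ θ₀)) / ∑ θ, exp (∑ ℓ, a ℓ k * log (r ℓ θ)) := by
    simp only [geometricPool, hexponent]
  have hZ := sum_exp_weighted_log_le_one ha ha1 hr hr1
  have hZpos : 0 < ∑ θ, exp (∑ ℓ, a ℓ k * log (r ℓ θ)) :=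
    sum_pos (fun _ _ => exp_pos _) ⟨θ₀, mem_univ _⟩
  rw [hpool, one_div_div, log_div hZpos.ne' (exp_pos _).ne', log_exp]
  simp only [hrθ₀, one_div, log_inv, mul_neg, sum_neg_distrib]
  linarith [log_nonpos hZpos.le hZ]

lemma censored_pos {H : ℕ} (hH : 2 ≤ H) {q : Fin H → ℝ} {θ₀ : Fin H} {x : ℝ} (hx0 : 0 < x)
    (hx1 : x < 1) (hq₀ : q θ₀ = x) (hq : ∀ θ, θ ≠ θ₀ → q θ = (1 - x) / ((H : ℝ) - 1)) (θ : Fin H) :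
    0 < q θ := by
  by_cases h : θ = θ₀
  · rw [h, hq₀]; exact hx0
  · rw [hq θ h]
    have : (2 : ℝ) ≤ H := by exact_mod_cast hH
    exact div_pos (by linarith) (by linarith)

lemma sum_censored {H : ℕ} (hH : 2 ≤ H) {q : Fin H → ℝ} {θ₀ : Fin H} {x : ℝ} (hq₀ : q θ₀ = x)
    (hq : ∀ θ, θ ≠ θ₀ → q θ = (1 - x) / ((H : ℝ) - 1)) : ∑ θ, q θ = 1 := by
  have hH' : (2 : ℝ) ≤ H := by exact_mod_cast hH
  rw [← add_sum_erase _ _ (mem_univ θ₀), hq₀, sum_congr rfl fun θ hθ => hq θ (ne_of_mem_erase hθ),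
    sum_const, card_erase_of_mem (mem_univ θ₀), card_univ, Fintype.card_fin, nsmul_eq_mul,
    Nat.cast_sub (by omega : 1 ≤ H), Nat.cast_one,
    mul_div_cancel₀ _ (by linarith)]
  ring

end Updates

section Signals

variable {Ω β : Type*} {mΩ : MeasurableSpace Ω} [MeasurableSpace β] {P : Measure Ω}

abbrev pastSigma (Z : ℕ → Ω → β) (i : ℕ) : MeasurableSpace Ω :=
  ⨆ j ∈ Set.Iio i, MeasurableSpace.comap (Z j) inferInstance

variable {Z : ℕ → Ω → β}

lemma pastSigma_mono : Monotone (pastSigma Z) := fun _ _ hij =>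
  biSup_mono fun _ hj => lt_of_lt_of_le hj hij

lemma pastSigma_le (hZ : ∀ j, Measurable (Z j)) (i : ℕ) : pastSigma Z i ≤ mΩ :=
  iSup₂_le fun j _ => (hZ j).comap_le

lemma measurable_pastSigma_succ (i : ℕ) : Measurable[pastSigma Z (i + 1)] (Z i) :=
  Measurable.of_comap_le (le_iSup₂_of_le i (Nat.lt_succ_self i) le_rfl)

lemma indepFun_of_measurable_pastSigma (hZ : ∀ j, Measurable (Z j)) (hind : iIndepFun Z P)
    {γ : Type*} [MeasurableSpace γ] {f : Ω → γ} {i : ℕ} (hf : Measurable[pastSigma Z i] f) :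
    IndepFun f (Z i) P := by
  have hpast := indep_iSup_of_disjoint (fun j => (hZ j).comap_le)
    ((iIndepFun_iff_iIndep _ _ _).1 hind) (S := Set.Iio i) (T := {i}) (by simp)
  rw [IndepFun_iff_Indep]
  refine indep_of_indep_of_le_right (indep_of_indep_of_le_left hpast hf.comap_le) ?_
  exact le_iSup₂_of_le i (Set.mem_singleton i) le_rfl

end Signals

section Integrals

variable {Ω : Type*} {mΩ : MeasurableSpace Ω} {P : Measure Ω}

lemma toNNReal_smul_div_cancel {α : Type*} {f g : α → ℝ} (hg_pos : ∀ x, 0 < g x) :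
    (fun x => (g x).toNNReal • (f x / g x)) = f := by
  funext x
  rw [NNReal.smul_def, Real.coe_toNNReal _ (hg_pos x).le, smul_eq_mul,
    mul_div_cancel₀ _ (hg_pos x).ne']

variable {α : Type*} [MeasurableSpace α] {ν : Measure α} {f g : α → ℝ} {Y : Ω → α}

lemma integrable_comp_div_of_map_eq_withDensity (hf : Measurable f) (hg : Measurable g)
    (hg_pos : ∀ x, 0 < g x) (hfi : Integrable f ν) (hY : Measurable Y)
    (hmap : P.map Y = ν.withDensity fun x => ENNReal.ofReal (g x)) :
    Integrable (fun ω => f (Y ω) / g (Y ω)) P := by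
  have hfg : Measurable fun x => f x / g x := hf.div hg
  change Integrable ((fun x => f x / g x) ∘ Y) P
  rw [← integrable_map_measure hfg.aestronglyMeasurable hY.aemeasurable, hmap]
  simp only [ENNReal.ofReal]
  rw [integrable_withDensity_iff_integrable_smul hg.real_toNNReal, toNNReal_smul_div_cancel hg_pos]
  exact hfi

lemma integral_comp_div_of_map_eq_withDensity (hf : Measurable f) (hg : Measurable g)
    (hg_pos : ∀ x, 0 < g x) (hY : Measurable Y)
    (hmap : P.map Y = ν.withDensity fun x => ENNReal.ofReal (g x)) :
    ∫ ω, f (Y ω) / g (Y ω) ∂P = ∫ x, f x ∂ν := by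
  have hfg : Measurable fun x => f x / g x := hf.div hg
  rw [← integral_map hY.aemeasurable hfg.aestronglyMeasurable, hmap]
  simp only [ENNReal.ofReal]
  rw [integral_withDensity_eq_integral_smul hg.real_toNNReal, toNNReal_smul_div_cancel hg_pos]

variable {ι : Type*} [Fintype ι] {p R : ι → Ω → ℝ}

lemma integrable_mul_of_sum_eq_one (hp : ∀ θ, AEStronglyMeasurable (p θ) P)
    (hp0 : ∀ θ ω, 0 ≤ p θ ω) (hp1 : ∀ ω, ∑ θ, p θ ω = 1) (hR : ∀ θ, Integrable (R θ) P) (θ : ι) :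
    Integrable (fun ω => p θ ω * R θ ω) P := by
  refine (hR θ).bdd_mul (c := 1) (hp θ) (ae_of_all _ fun ω => ?_)
  rw [norm_of_nonneg (hp0 θ ω), ← hp1 ω]
  exact single_le_sum (fun θ' _ => hp0 θ' ω) (mem_univ θ)

lemma integral_sum_mul_eq_one_of_indepFun [IsProbabilityMeasure P]
    (hp : ∀ θ, AEStronglyMeasurable (p θ) P)
    (hp0 : ∀ θ ω, 0 ≤ p θ ω) (hp1 : ∀ ω, ∑ θ, p θ ω = 1) (hR : ∀ θ, Integrable (R θ) P)
    (hR1 : ∀ θ, ∫ ω, R θ ω ∂P = 1) (hind : ∀ θ, IndepFun (p θ) (R θ) P) :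
    ∫ ω, ∑ θ, p θ ω * R θ ω ∂P = 1 := by
  have hp_int : ∀ θ, Integrable (p θ) P := fun θ => by
    simpa using integrable_mul_of_sum_eq_one hp hp0 hp1 (fun _ => integrable_const 1) θ
  calc ∫ ω, ∑ θ, p θ ω * R θ ω ∂P
      = ∑ θ, (∫ ω, p θ ω ∂P) * ∫ ω, R θ ω ∂P := by
        rw [integral_finsetSum _ fun θ _ => integrable_mul_of_sum_eq_one hp hp0 hp1 hR θ]
        exact sum_congr rfl fun θ _ => (hind θ).integral_mul_eq_mul_integral (hp θ)
          (hR θ).aestronglyMeasurable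
    _ = ∫ ω, ∑ θ, p θ ω ∂P := by
        simp only [hR1, mul_one]
        exact (integral_finsetSum _ fun θ _ => hp_int θ).symm
    _ = 1 := by simp [hp1]

end Integrals

section Lyapunov

variable {Ω : Type*} {mΩ : MeasurableSpace Ω} {P : Measure Ω}

lemma integrable_and_integral_le_of_le_add_sub_one [IsProbabilityMeasure P] {f g T : Ω → ℝ}
    (hf : Integrable f P) (hg : AEStronglyMeasurable g P) (hg0 : ∀ ω, 0 ≤ g ω)
    (hT : Integrable T P) (hT1 : ∫ ω, T ω ∂P = 1) (hle : ∀ ω, g ω ≤ f ω + (T ω - 1)) :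
    Integrable g P ∧ ∫ ω, g ω ∂P ≤ ∫ ω, f ω ∂P := by
  have hT' : Integrable (fun ω => T ω - 1) P := hT.sub (integrable_const 1)
  have hbound : Integrable (fun ω => f ω + (T ω - 1)) P := hf.add hT'
  have hbound_int : ∫ ω, f ω + (T ω - 1) ∂P = ∫ ω, f ω ∂P := by
    rw [integral_add hf hT', integral_sub hT (integrable_const 1), hT1]
    simp
  refine ⟨hbound.mono' hg (ae_of_all _ fun ω => ?_), ?_⟩
  · rw [norm_of_nonneg (hg0 ω)]
    exact hle ω
  · exact hbound_int ▸ integral_mono_of_nonneg (ae_of_all _ hg0) hbound (ae_of_all _ hle)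

variable {ι : Type*} [Fintype ι] {a : ι → ι → ℝ} {v : ι → ℝ}

lemma sum_mul_sum_mul_eq_of_eigenvector (hv : ∀ ℓ, ∑ k, a ℓ k * v k = v ℓ) (x : ι → ℝ) :
    ∑ k, v k * ∑ ℓ, a ℓ k * x ℓ = ∑ ℓ, v ℓ * x ℓ := by
  calc ∑ k, v k * ∑ ℓ, a ℓ k * x ℓ = ∑ ℓ, ∑ k, a ℓ k * v k * x ℓ := by
        simp_rw [mul_sum]
        rw [sum_comm]
        exact sum_congr rfl fun _ _ => sum_congr rfl fun _ _ => by ring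
    _ = ∑ ℓ, v ℓ * x ℓ := by simp_rw [← sum_mul, hv]

lemma integrable_and_integral_le_sum_of_le_sum {f : Ω → ℝ} {g : ι → Ω → ℝ} {w : ι → ℝ}
    (hf : AEStronglyMeasurable f P) (hf0 : ∀ ω, 0 ≤ f ω) (hg : ∀ ℓ, Integrable (g ℓ) P)
    (hle : ∀ ω, f ω ≤ ∑ ℓ, w ℓ * g ℓ ω) :
    Integrable f P ∧ ∫ ω, f ω ∂P ≤ ∑ ℓ, w ℓ * ∫ ω, g ℓ ω ∂P := by
  have hsum : Integrable (fun ω => ∑ ℓ, w ℓ * g ℓ ω) P :=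
    integrable_finsetSum _ fun ℓ _ => (hg ℓ).const_mul (w ℓ)
  refine ⟨hsum.mono' hf (ae_of_all _ fun ω => by rw [norm_of_nonneg (hf0 ω)]; exact hle ω), ?_⟩
  calc ∫ ω, f ω ∂P ≤ ∫ ω, ∑ ℓ, w ℓ * g ℓ ω ∂P :=
        integral_mono_of_nonneg (ae_of_all _ hf0) hsum (ae_of_all _ hle)
    _ = ∑ ℓ, w ℓ * ∫ ω, g ℓ ω ∂P := by
        rw [integral_finsetSum _ fun ℓ _ => (hg ℓ).const_mul (w ℓ)]
        simp only [integral_const_mul]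

lemma sum_mul_integral_le_of_adapt_combine [IsProbabilityMeasure P]
    (hv0 : ∀ k, 0 ≤ v k) (hv : ∀ ℓ, ∑ k, a ℓ k * v k = v ℓ) {f g T : ℕ → ι → Ω → ℝ}
    (hf_meas : ∀ i k, AEStronglyMeasurable (f i k) P)
    (hg_meas : ∀ i k, AEStronglyMeasurable (g i k) P)
    (hf0 : ∀ i k ω, 0 ≤ f i k ω) (hg0 : ∀ i k ω, 0 ≤ g i k ω) (hf_init : ∀ k, Integrable (f 0 k) P)
    (hT : ∀ i k, Integrable (T i k) P) (hT1 : ∀ i k, ∫ ω, T i k ω ∂P = 1)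
    (hg_le : ∀ i k ω, g i k ω ≤ f i k ω + (T i k ω - 1))
    (hf_le : ∀ i k ω, f (i + 1) k ω ≤ ∑ ℓ, a ℓ k * g i ℓ ω) (i : ℕ) :
    ∑ k, v k * ∫ ω, g i k ω ∂P ≤ ∑ k, v k * ∫ ω, f 0 k ω ∂P := by
  have adapt : ∀ i, (∀ k, Integrable (f i k) P) →
      ∀ k, Integrable (g i k) P ∧ ∫ ω, g i k ω ∂P ≤ ∫ ω, f i k ω ∂P := fun i hf k =>
    integrable_and_integral_le_of_le_add_sub_one (hf k) (hg_meas i k) (hg0 i k) (hT i k)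
      (hT1 i k) (hg_le i k)
  have adapt_sum : ∀ i, (∀ k, Integrable (f i k) P) →
      ∑ k, v k * ∫ ω, g i k ω ∂P ≤ ∑ k, v k * ∫ ω, f i k ω ∂P := fun i hf =>
    sum_le_sum fun k _ => mul_le_mul_of_nonneg_left (adapt i hf k).2 (hv0 k)
  have main : ∀ i, (∀ k, Integrable (f i k) P) ∧
      ∑ k, v k * ∫ ω, f i k ω ∂P ≤ ∑ k, v k * ∫ ω, f 0 k ω ∂P := by
    intro i
    induction i with
    | zero => exact ⟨hf_init, le_rfl⟩
    | succ i ih =>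
      have combine := fun k => integrable_and_integral_le_sum_of_le_sum (hf_meas (i + 1) k)
        (hf0 (i + 1) k) (fun ℓ => (adapt i ih.1 ℓ).1) (hf_le i k)
      refine ⟨fun k => (combine k).1, ?_⟩
      calc ∑ k, v k * ∫ ω, f (i + 1) k ω ∂P
          ≤ ∑ k, v k * ∑ ℓ, a ℓ k * ∫ ω, g i ℓ ω ∂P :=
            sum_le_sum fun k _ => mul_le_mul_of_nonneg_left (combine k).2 (hv0 k)
        _ = ∑ ℓ, v ℓ * ∫ ω, g i ℓ ω ∂P := sum_mul_sum_mul_eq_of_eigenvector hv _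
        _ ≤ ∑ k, v k * ∫ ω, f i k ω ∂P := adapt_sum i ih.1
        _ ≤ ∑ k, v k * ∫ ω, f 0 k ω ∂P := ih.2
  exact (adapt_sum i (main i).1).trans (main i).2

end Lyapunov

section Algorithm

variable {Ω : Type*} {mΩ : MeasurableSpace Ω} {P : Measure Ω} {K H : ℕ} {X : Fin K → Type*}

/-- A run of the partial-information algorithm with self-awareness transmitting `θ₀`: `μ` are the
beliefs, `ψ` the intermediate beliefs and `ψh` the censored beliefs shared with neighbours. -/
structure IsPartialInfoRun (L : ∀ k : Fin K, Fin H → X k → ℝ) (a : Fin K → Fin K → ℝ)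
    (θ₀ : Fin H) (μ₀ : Fin K → Fin H → ℝ) (ξ : ∀ k : Fin K, ℕ → Ω → X k)
    (μ ψ ψh : Fin K → ℕ → Fin H → Ω → ℝ) : Prop where
  init : ∀ k θ ω, μ k 0 θ ω = μ₀ k θ
  adapt : ∀ k i θ ω, ψ k (i + 1) θ ω = bayesUpdate (μ k i · ω) (L k · (ξ k (i + 1) ω)) θ
  censor_tx : ∀ k i ω, ψh k (i + 1) θ₀ ω = ψ k (i + 1) θ₀ ω
  censor_ntx : ∀ k i θ ω, θ ≠ θ₀ → ψh k (i + 1) θ ω = (1 - ψ k (i + 1) θ₀ ω) / ((H : ℝ) - 1)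
  combine : ∀ k i θ ω,
    μ k (i + 1) θ ω = geometricPool a (ψ · (i + 1) · ω) (ψh · (i + 1) · ω) k θ

namespace IsPartialInfoRun

variable {L : ∀ k : Fin K, Fin H → X k → ℝ} {a : Fin K → Fin K → ℝ} {θ₀ : Fin H}
  {μ₀ : Fin K → Fin H → ℝ} {ξ : ∀ k : Fin K, ℕ → Ω → X k} {μ ψ ψh : Fin K → ℕ → Fin H → Ω → ℝ}

lemma belief_pos (h : IsPartialInfoRun L a θ₀ μ₀ ξ μ ψ ψh) (hμ₀ : ∀ k θ, 0 < μ₀ k θ) :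
    ∀ k i θ ω, 0 < μ k i θ ω
  | k, 0, θ, ω => h.init k θ ω ▸ hμ₀ k θ
  | k, i + 1, θ, ω => h.combine k i θ ω ▸ geometricPool_pos _ _ _ k θ

lemma sum_belief (h : IsPartialInfoRun L a θ₀ μ₀ ξ μ ψ ψh) (hμ₀ : ∀ k, ∑ θ, μ₀ k θ = 1) :
    ∀ k i ω, ∑ θ, μ k i θ ω = 1
  | k, 0, ω => by simp only [h.init, hμ₀]
  | k, i + 1, ω => by
    have : Nonempty (Fin H) := ⟨θ₀⟩
    simp only [h.combine]
    exact sum_geometricPool _ _ _ k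

lemma belief_le_one (h : IsPartialInfoRun L a θ₀ μ₀ ξ μ ψ ψh) (hμ₀ : ∀ k θ, 0 < μ₀ k θ)
    (hμ₀1 : ∀ k, ∑ θ, μ₀ k θ = 1) (k : Fin K) (i : ℕ) (θ : Fin H) (ω : Ω) : μ k i θ ω ≤ 1 :=
  h.sum_belief hμ₀1 k i ω ▸
    single_le_sum (fun θ' _ => (h.belief_pos hμ₀ k i θ' ω).le) (mem_univ θ)

lemma intermediate_pos (h : IsPartialInfoRun L a θ₀ μ₀ ξ μ ψ ψh) (hL : ∀ k θ x, 0 < L k θ x)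
    (hμ₀ : ∀ k θ, 0 < μ₀ k θ) (k : Fin K) (i : ℕ) (θ : Fin H) (ω : Ω) : 0 < ψ k (i + 1) θ ω := by
  rw [h.adapt]
  exact div_sum_pos (fun θ => mul_pos (h.belief_pos hμ₀ k i θ ω) (hL k θ _)) θ

lemma sum_intermediate (h : IsPartialInfoRun L a θ₀ μ₀ ξ μ ψ ψh) (hL : ∀ k θ x, 0 < L k θ x)
    (hμ₀ : ∀ k θ, 0 < μ₀ k θ) (k : Fin K) (i : ℕ) (ω : Ω) : ∑ θ, ψ k (i + 1) θ ω = 1 := by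
  have : Nonempty (Fin H) := ⟨θ₀⟩
  simp only [h.adapt]
  exact sum_div_sum_self fun θ => mul_pos (h.belief_pos hμ₀ k i θ ω) (hL k θ _)

lemma intermediate_lt_one (h : IsPartialInfoRun L a θ₀ μ₀ ξ μ ψ ψh) (hH : 2 ≤ H)
    (hL : ∀ k θ x, 0 < L k θ x) (hμ₀ : ∀ k θ, 0 < μ₀ k θ) (k : Fin K) (i : ℕ) (ω : Ω) :
    ψ k (i + 1) θ₀ ω < 1 := by
  have : Nontrivial (Fin H) := Fin.nontrivial_iff_two_le.2 hH
  obtain ⟨θ, hθ⟩ := exists_ne θ₀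
  exact lt_one_of_sum_eq_one (h.intermediate_pos hL hμ₀ k i · ω)
    (h.sum_intermediate hL hμ₀ k i ω) hθ

lemma log_inv_belief_nonneg (h : IsPartialInfoRun L a θ₀ μ₀ ξ μ ψ ψh) (hμ₀ : ∀ k θ, 0 < μ₀ k θ)
    (hμ₀1 : ∀ k, ∑ θ, μ₀ k θ = 1) (k : Fin K) (i : ℕ) (ω : Ω) : 0 ≤ log (1 / μ k i θ₀ ω) :=
  log_nonneg (one_le_one_div (h.belief_pos hμ₀ k i θ₀ ω) (h.belief_le_one hμ₀ hμ₀1 k i θ₀ ω))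

lemma log_inv_intermediate_nonneg (h : IsPartialInfoRun L a θ₀ μ₀ ξ μ ψ ψh) (hH : 2 ≤ H)
    (hL : ∀ k θ x, 0 < L k θ x) (hμ₀ : ∀ k θ, 0 < μ₀ k θ) (k : Fin K) (i : ℕ) (ω : Ω) :
    0 ≤ log (1 / ψ k (i + 1) θ₀ ω) :=
  log_nonneg (one_le_one_div (h.intermediate_pos hL hμ₀ k i θ₀ ω)
    (h.intermediate_lt_one hH hL hμ₀ k i ω).le)

lemma log_inv_intermediate_le (h : IsPartialInfoRun L a θ₀ μ₀ ξ μ ψ ψh)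
    (hL : ∀ k θ x, 0 < L k θ x) (hμ₀ : ∀ k θ, 0 < μ₀ k θ) (k : Fin K) (i : ℕ) (ω : Ω) :
    log (1 / ψ k (i + 1) θ₀ ω) ≤ log (1 / μ k i θ₀ ω) +
      ((∑ θ, μ k i θ ω * (L k θ (ξ k (i + 1) ω) / L k θ₀ (ξ k (i + 1) ω))) - 1) := by
  rw [h.adapt]
  exact log_inv_bayesUpdate_le (h.belief_pos hμ₀ k i · ω) (hL k · _) θ₀

lemma log_inv_belief_succ_le (h : IsPartialInfoRun L a θ₀ μ₀ ξ μ ψ ψh) (hH : 2 ≤ H)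
    (hL : ∀ k θ x, 0 < L k θ x) (hμ₀ : ∀ k θ, 0 < μ₀ k θ) (ha : ∀ ℓ k, 0 ≤ a ℓ k)
    (ha1 : ∀ k, ∑ ℓ, a ℓ k = 1) (k : Fin K) (i : ℕ) (ω : Ω) :
    log (1 / μ k (i + 1) θ₀ ω) ≤ ∑ ℓ, a ℓ k * log (1 / ψ ℓ (i + 1) θ₀ ω) := by
  have hψ₀ := h.intermediate_pos hL hμ₀
  have hψ₁ := h.intermediate_lt_one hH hL hμ₀
  rw [h.combine]
  exact log_inv_geometricPool_le (ha · k) (ha1 k) (hψ₀ · i · ω)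
    (h.sum_intermediate hL hμ₀ · i ω)
    (fun ℓ => censored_pos hH (hψ₀ ℓ i θ₀ ω) (hψ₁ ℓ i ω) (h.censor_tx ℓ i ω)
      (h.censor_ntx ℓ i · ω))
    (fun ℓ => sum_censored hH (h.censor_tx ℓ i ω) (h.censor_ntx ℓ i · ω)) (h.censor_tx · i ω)

lemma measurable_censored (h : IsPartialInfoRun L a θ₀ μ₀ ξ μ ψ ψh) {m : MeasurableSpace Ω}
    {i : ℕ} (hψ : ∀ k, Measurable[m] (ψ k (i + 1) θ₀)) (k : Fin K) (θ : Fin H) :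
    Measurable[m] (ψh k (i + 1) θ) := by
  by_cases hθ : θ = θ₀
  · rw [hθ, funext (h.censor_tx k i)]
    exact hψ k
  · rw [funext (h.censor_ntx k i θ · hθ)]
    exact ((hψ k).const_sub 1).div_const _

variable [∀ k, MeasurableSpace (X k)] {ν : ∀ k, Measure (X k)}

lemma measurable_intermediate (h : IsPartialInfoRun L a θ₀ μ₀ ξ μ ψ ψh)
    (hL : ∀ k θ, Measurable (L k θ)) {m : MeasurableSpace Ω} {i : ℕ}
    (hμ : ∀ k θ, Measurable[m] (μ k i θ)) (hξ : ∀ k, Measurable[m] (ξ k (i + 1))) (k : Fin K)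
    (θ : Fin H) : Measurable[m] (ψ k (i + 1) θ) := by
  rw [funext (h.adapt k i θ)]
  unfold bayesUpdate
  fun_prop

lemma measurable_belief (h : IsPartialInfoRun L a θ₀ μ₀ ξ μ ψ ψh)
    (hL : ∀ k θ, Measurable (L k θ)) :
    ∀ i k θ, Measurable[pastSigma (fun j ω k => ξ k (j + 1) ω) i] (μ k i θ)
  | 0, k, θ => by
    rw [funext (h.init k θ)]
    exact measurable_const
  | i + 1, k, θ => by
    have hξ : ∀ k, Measurable[pastSigma (fun j ω k => ξ k (j + 1) ω) (i + 1)] (ξ k (i + 1)) :=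
      fun k => (measurable_pi_apply k).comp (measurable_pastSigma_succ i)
    have hψ := h.measurable_intermediate hL
      (fun k θ => (h.measurable_belief hL i k θ).mono (pastSigma_mono i.le_succ) le_rfl) hξ
    have hψh := h.measurable_censored (hψ · θ₀)
    rw [funext (h.combine k i θ)]
    unfold geometricPool
    fun_prop

lemma integrable_and_integral_predictive_ratio [IsProbabilityMeasure P]
    (h : IsPartialInfoRun L a θ₀ μ₀ ξ μ ψ ψh) (hL : ∀ k θ x, 0 < L k θ x)
    (hLm : ∀ k θ, Measurable (L k θ)) (hLν : ∀ k θ, ∫ x, L k θ x ∂(ν k) = 1)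
    (hμ₀ : ∀ k θ, 0 < μ₀ k θ) (hμ₀1 : ∀ k, ∑ θ, μ₀ k θ = 1) (hξ : ∀ k i, Measurable (ξ k i))
    (hξdist : ∀ k i, 1 ≤ i →
      P.map (ξ k i) = (ν k).withDensity fun x => ENNReal.ofReal (L k θ₀ x))
    (hξind : iIndepFun (fun i ω k => ξ k (i + 1) ω) P) (k : Fin K) (i : ℕ) :
    Integrable (fun ω => ∑ θ, μ k i θ ω * (L k θ (ξ k (i + 1) ω) / L k θ₀ (ξ k (i + 1) ω))) P ∧
      ∫ ω, ∑ θ, μ k i θ ω * (L k θ (ξ k (i + 1) ω) / L k θ₀ (ξ k (i + 1) ω)) ∂P = 1 := by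
  have hZ : ∀ j, Measurable fun ω k => ξ k (j + 1) ω := fun j => by fun_prop
  have hμm : ∀ θ, Measurable[pastSigma (fun j ω k => ξ k (j + 1) ω) i] (μ k i θ) :=
    h.measurable_belief hLm i k
  have hμ : ∀ θ, AEStronglyMeasurable (μ k i θ) P := fun θ =>
    ((hμm θ).mono (pastSigma_le hZ i) le_rfl).aestronglyMeasurable
  have hμ0 : ∀ θ ω, 0 ≤ μ k i θ ω := fun θ ω => (h.belief_pos hμ₀ k i θ ω).le
  have hR : ∀ θ, Integrable (fun ω => L k θ (ξ k (i + 1) ω) / L k θ₀ (ξ k (i + 1) ω)) P :=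
    fun θ => integrable_comp_div_of_map_eq_withDensity (hLm k θ) (hLm k θ₀) (hL k θ₀)
      (.of_integral_ne_zero (by simp [hLν])) (hξ k _) (hξdist k _ (Nat.le_add_left 1 i))
  refine ⟨integrable_finsetSum _ fun θ _ =>
    integrable_mul_of_sum_eq_one hμ hμ0 (h.sum_belief hμ₀1 k i) hR θ, ?_⟩
  refine integral_sum_mul_eq_one_of_indepFun hμ hμ0 (h.sum_belief hμ₀1 k i) hR
    (fun θ => ?_) (fun θ => ?_)
  · rw [integral_comp_div_of_map_eq_withDensity (hLm k θ) (hLm k θ₀) (hL k θ₀) (hξ k _)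
      (hξdist k _ (Nat.le_add_left 1 i)), hLν]
  · exact (indepFun_of_measurable_pastSigma hZ hξind (hμm θ)).comp measurable_id
      (by fun_prop : Measurable fun s : ∀ k, X k => L k θ (s k) / L k θ₀ (s k))

end IsPartialInfoRun

end Algorithm

theorem expectation_of_log_intermediate_beliefs_general
    {Ω : Type} [mΩ : MeasurableSpace Ω] (P : Measure Ω) [IsProbabilityMeasure P]
    (K H : ℕ) (hH : 2 ≤ H)
    (X : Fin K → Type) [∀ k, MeasurableSpace (X k)]
    (ν : ∀ k, Measure (X k))
    (L : ∀ k : Fin K, Fin H → X k → ℝ)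
    (θ0 : Fin H)
    (hLpos : ∀ k θ x, 0 < L k θ x)
    (hLmeas : ∀ k θ, Measurable (L k θ))
    (hLdens : ∀ k θ, ∫ x, L k θ x ∂(ν k) = 1)
    (ξ : ∀ k : Fin K, ℕ → Ω → X k)
    (hξmeas : ∀ k i, Measurable (ξ k i))
    (hξdist : ∀ k (i : ℕ), 1 ≤ i →
      Measure.map (ξ k i) P = (ν k).withDensity (fun x => ENNReal.ofReal (L k θ0 x)))
    (hξindep : iIndepFun
      (fun (i : ℕ) (ω : Ω) (k : Fin K) => ξ k (i + 1) ω) P)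
    (a : Fin K → Fin K → ℝ)
    (ha_nonneg : ∀ ℓ k, 0 ≤ a ℓ k)
    (ha_stoch : ∀ k, ∑ ℓ, a ℓ k = 1)
    (v : Fin K → ℝ)
    (hv_pos : ∀ ℓ, 0 < v ℓ)
    (hv_eig : ∀ ℓ, ∑ k, a ℓ k * v k = v ℓ)
    (θTX : Fin H)
    (hθTX : θTX = θ0)
    (μb ψ ψh : Fin K → ℕ → Fin H → Ω → ℝ)
    (μinit : Fin K → Fin H → ℝ)
    (hμinit_pos : ∀ k θ, 0 < μinit k θ)
    (hμinit_sum : ∀ k, ∑ θ, μinit k θ = 1)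
    (hμb0 : ∀ k θ ω, μb k 0 θ ω = μinit k θ)
    (hψ : ∀ k (i : ℕ) θ ω, ψ k (i + 1) θ ω =
      μb k i θ ω * L k θ (ξ k (i + 1) ω) /
        ∑ θ', μb k i θ' ω * L k θ' (ξ k (i + 1) ω))
    (hψh_tx : ∀ k (i : ℕ) ω, ψh k (i + 1) θTX ω = ψ k (i + 1) θTX ω)
    (hψh_ntx : ∀ k (i : ℕ) θ ω, θ ≠ θTX →
      ψh k (i + 1) θ ω = (1 - ψ k (i + 1) θTX ω) / ((H : ℝ) - 1))
    (hcomb : ∀ k (i : ℕ) θ ω, μb k (i + 1) θ ω =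
      Real.exp (a k k * Real.log (ψ k (i + 1) θ ω) +
          ∑ ℓ ∈ Finset.univ.erase k, a ℓ k * Real.log (ψh ℓ (i + 1) θ ω)) /
        ∑ θ', Real.exp (a k k * Real.log (ψ k (i + 1) θ' ω) +
          ∑ ℓ ∈ Finset.univ.erase k, a ℓ k * Real.log (ψh ℓ (i + 1) θ' ω)))
    :
    ∀ (k : Fin K) (i : ℕ),
      (∫ ω, Real.log (1 / ψ k (i + 1) θTX ω) ∂P) ≤
        (1 / v k) * ∑ ℓ, v ℓ * Real.log (1 / μinit ℓ θTX) := by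
  subst hθTX
  have h : IsPartialInfoRun L a θTX μinit ξ μb ψ ψh := ⟨hμb0, hψ, hψh_tx, hψh_ntx, hcomb⟩
  have hZ : ∀ j, Measurable fun ω k => ξ k (j + 1) ω := fun j => by fun_prop
  have hμm : ∀ i k θ, Measurable (μb k i θ) := fun i k θ =>
    (h.measurable_belief hLmeas i k θ).mono (pastSigma_le hZ i) le_rfl
  have hψm : ∀ i k θ, Measurable (ψ k (i + 1) θ) := fun i =>
    h.measurable_intermediate hLmeas (hμm i) (hξmeas · (i + 1))
  have hψ0 := fun i k => h.log_inv_intermediate_nonneg hH hLpos hμinit_pos k i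
  have hT := fun i k => h.integrable_and_integral_predictive_ratio hLpos hLmeas hLdens
    hμinit_pos hμinit_sum hξmeas hξdist hξindep k i
  intro k i
  have hV := sum_mul_integral_le_of_adapt_combine (P := P) (fun k => (hv_pos k).le) hv_eig
    (f := fun i k ω => log (1 / μb k i θTX ω)) (g := fun i k ω => log (1 / ψ k (i + 1) θTX ω))
    (fun i k => (measurable_const.div (hμm i k θTX)).log.aestronglyMeasurable)
    (fun i k => (measurable_const.div (hψm i k θTX)).log.aestronglyMeasurable)
    (fun i k => h.log_inv_belief_nonneg hμinit_pos hμinit_sum k i) hψ0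
    (fun k => by simp [hμb0]) (fun i k => (hT i k).1) (fun i k => (hT i k).2)
    (fun i k => h.log_inv_intermediate_le hLpos hμinit_pos k i)
    (fun i k => h.log_inv_belief_succ_le hH hLpos hμinit_pos ha_nonneg ha_stoch k i) i
  simp only [hμb0, integral_const, probReal_univ, one_smul] at hV
  have hk := single_le_sum
    (fun ℓ _ => mul_nonneg (hv_pos ℓ).le (integral_nonneg (μ := P) (hψ0 i ℓ))) (mem_univ k)
  rw [one_div_mul_eq_div, le_div_iff₀' (hv_pos k)]
  exact hk.trans hV

theorem expectation_of_log_intermediate_beliefs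
    {Ω : Type} [mΩ : MeasurableSpace Ω] (P : Measure Ω) [IsProbabilityMeasure P]
    (K H : ℕ) (hK : 0 < K) (hH : 2 ≤ H)
    (X : Fin K → Type) [∀ k, MeasurableSpace (X k)]
    (ν : ∀ k, Measure (X k))
    (L : ∀ k : Fin K, Fin H → X k → ℝ)
    (θ0 : Fin H)
    (hLpos : ∀ k θ x, 0 < L k θ x)
    (hLmeas : ∀ k θ, Measurable (L k θ))
    (hLdens : ∀ k θ, ∫ x, L k θ x ∂(ν k) = 1)
    (ξ : ∀ k : Fin K, ℕ → Ω → X k)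
    (hξmeas : ∀ k i, Measurable (ξ k i))
    (hξdist : ∀ k (i : ℕ), 1 ≤ i →
      Measure.map (ξ k i) P = (ν k).withDensity (fun x => ENNReal.ofReal (L k θ0 x)))
    (hξindep : iIndepFun
      (fun (i : ℕ) (ω : Ω) (k : Fin K) => ξ k (i + 1) ω) P)
    (hKL : ∀ k θ θ',
      Integrable (fun x => L k θ x * Real.log (L k θ x / L k θ' x)) (ν k))
    (a : Fin K → Fin K → ℝ)
    (ha_nonneg : ∀ ℓ k, 0 ≤ a ℓ k)
    (ha_stoch : ∀ k, ∑ ℓ, a ℓ k = 1)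
    (ha_prim : ∃ n : ℕ, ∀ ℓ k, 0 < ((Matrix.of a) ^ n) ℓ k)
    (v : Fin K → ℝ)
    (hv_pos : ∀ ℓ, 0 < v ℓ)
    (hv_sum : ∑ ℓ, v ℓ = 1)
    (hv_eig : ∀ ℓ, ∑ k, a ℓ k * v k = v ℓ)
    (ha_self : ∀ k, 0 < a k k)
    (θTX : Fin H)
    (hθTX : θTX = θ0)
    (μb ψ ψh : Fin K → ℕ → Fin H → Ω → ℝ)
    (μinit : Fin K → Fin H → ℝ)
    (hμinit_pos : ∀ k θ, 0 < μinit k θ)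
    (hμinit_sum : ∀ k, ∑ θ, μinit k θ = 1)
    (hμb0 : ∀ k θ ω, μb k 0 θ ω = μinit k θ)
    (hψ : ∀ k (i : ℕ) θ ω, ψ k (i + 1) θ ω =
      μb k i θ ω * L k θ (ξ k (i + 1) ω) /
        ∑ θ', μb k i θ' ω * L k θ' (ξ k (i + 1) ω))
    (hψh_tx : ∀ k (i : ℕ) ω, ψh k (i + 1) θTX ω = ψ k (i + 1) θTX ω)
    (hψh_ntx : ∀ k (i : ℕ) θ ω, θ ≠ θTX →
      ψh k (i + 1) θ ω = (1 - ψ k (i + 1) θTX ω) / ((H : ℝ) - 1))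
    (hcomb : ∀ k (i : ℕ) θ ω, μb k (i + 1) θ ω =
      Real.exp (a k k * Real.log (ψ k (i + 1) θ ω) +
          ∑ ℓ ∈ Finset.univ.erase k, a ℓ k * Real.log (ψh ℓ (i + 1) θ ω)) /
        ∑ θ', Real.exp (a k k * Real.log (ψ k (i + 1) θ' ω) +
          ∑ ℓ ∈ Finset.univ.erase k, a ℓ k * Real.log (ψh ℓ (i + 1) θ' ω)))
    :
    ∀ (k : Fin K) (i : ℕ),
      (∫ ω, Real.log (1 / ψ k (i + 1) θTX ω) ∂P) ≤
        (1 / v k) * ∑ ℓ, v ℓ * Real.log (1 / μinit ℓ θTX) :=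
  expectation_of_log_intermediate_beliefs_general (mΩ := mΩ) P K H hH X ν L θ0 hLpos hLmeas hLdens ξ
    hξmeas hξdist hξindep a ha_nonneg ha_stoch v hv_pos hv_eig θTX hθTX μb ψ ψh μinit hμinit_pos
    hμinit_sum hμb0 hψ hψh_tx hψh_ntx hcomb
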